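/- arXiv:1707.08238 — 3 statements merged into one kernel-verified Lean document; each statement's English description precedes it below -/
import Mathlib

section
/- Let θ_k, θ_i, θ_{-i} be positive reals with θ_i ≤ θ_k ≤ 2θ_i. Then (θ_i/(θ_i+θ_{-i}))·ln(1 + (θ_k-θ_i)θ_{-i}/((θ_k+θ_{-i})θ_i)) + (θ_{-i}/(θ_i+θ_{-i}))·ln(1 - (θ_k-θ_i)/(θ_k+θ_{-i})) ≥ -((θ_k-θ_i)²·θ_{-i})/((θ_k+θ_{-i})²·θ_i). -/
/-!
Both arguments of the logarithms are ratios of choice probabilities: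
`1 + (θk - θi) θmi / ((θk + θmi) θi) = θk S / (T θi)` and `1 - (θk - θi) / (θk + θmi) = S / T`,
with `S = θi + θmi` and `T = θk + θmi`. Bounding the first logarithm by `log x ≥ 1 - x⁻¹` and the
second, whose argument is at most `1`, by the sharper `log y ≥ (y - y⁻¹) / 2` leaves a rational
inequality whose numerator is
`θk θi (2 θi - θk) + θk θi θmi + 2 θmi² (θk - θi) ≥ 0`; this is where `θk ≤ 2 θi` enters.
-/

/-- Substituting `y = exp (-t)`, this is `t ≤ sinh t` for `t ≥ 0`. -/
theorem Real.sub_inv_div_two_le_log {y : ℝ} (hy : 0 < y) (hy1 : y ≤ 1) :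
    (y - y⁻¹) / 2 ≤ Real.log y := by
  have ht : 0 ≤ -Real.log y := neg_nonneg.mpr (Real.log_nonpos hy.le hy1)
  have hsinh := Real.self_le_sinh_iff.mpr ht
  rw [Real.sinh_eq, neg_neg, Real.exp_log hy, Real.exp_neg, Real.exp_log hy] at hsinh
  linarith

theorem stmt_4_general (θk θi θmi : ℝ) (hθi : 0 < θi) (hθmi : 0 < θmi)
    (h1 : θi ≤ θk) (h2 : θk ≤ 2 * θi) :
    (θi / (θi + θmi)) * Real.log (1 + (θk - θi) * θmi / ((θk + θmi) * θi)) +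
      (θmi / (θi + θmi)) * Real.log (1 - (θk - θi) / (θk + θmi)) ≥
    -((θk - θi) ^ 2 * θmi / ((θk + θmi) ^ 2 * θi)) := by
  have hθk : 0 < θk := hθi.trans_le h1
  set S := θi + θmi
  set T := θk + θmi
  have hS : 0 < S := by positivity
  have hT : 0 < T := by positivity
  have hx : 1 + (θk - θi) * θmi / (T * θi) = θk * S / (T * θi) := by field_simp; ring
  have hy : 1 - (θk - θi) / T = S / T := by field_simp; ring
  have hlog_x := Real.one_sub_inv_le_log_of_pos (x := θk * S / (T * θi)) (by positivity)
  have hlog_y := Real.sub_inv_div_two_le_log (y := S / T) (by positivity)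
    ((div_le_one hT).mpr (by linarith))
  rw [hx, hy, ge_iff_le]
  calc -((θk - θi) ^ 2 * θmi / (T ^ 2 * θi))
      ≤ θi / S * (1 - (θk * S / (T * θi))⁻¹) + θmi / S * ((S / T - (S / T)⁻¹) / 2) := by
        rw [← sub_nonneg]
        have hgap : θi / S * (1 - (θk * S / (T * θi))⁻¹) + θmi / S * ((S / T - (S / T)⁻¹) / 2)
            - -((θk - θi) ^ 2 * θmi / (T ^ 2 * θi))
            = (θk - θi) ^ 2 * θmi
              * (θk * θi * (2 * θi - θk) + θk * θi * θmi + 2 * θmi ^ 2 * (θk - θi))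
              / (2 * θk * θi * S ^ 2 * T ^ 2) := by
          field_simp; ring
        rw [hgap]
        positivity
    _ ≤ θi / S * Real.log (θk * S / (T * θi)) + θmi / S * Real.log (S / T) := by gcongr

theorem stmt_4 (θk θi θmi : ℝ) (hθk : 0 < θk) (hθi : 0 < θi) (hθmi : 0 < θmi)
    (h1 : θi ≤ θk) (h2 : θk ≤ 2 * θi) :
    (θi / (θi + θmi)) * Real.log (1 + (θk - θi) * θmi / ((θk + θmi) * θi)) +
      (θmi / (θi + θmi)) * Real.log (1 - (θk - θi) / (θk + θmi)) ≥
    -((θk - θi) ^ 2 * θmi / ((θk + θmi) ^ 2 * θi)) :=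
  stmt_4_general θk θi θmi hθi hθmi h1 h2
end

section
/- Let θ_1 ≥ ... ≥ θ_n > 0 with θ_k > θ_{k+1}. Then for any l ≥ 2, n/l + k + (Σ_{i≥k+1} θ_i)/θ_k + Σ_{i≥k+1, θ_i≥θ_k/2} θ_k²/(θ_k-θ_i)² + Σ_{i≤k, θ_i≤2θ_{k+1}} θ_{k+1}²/(θ_{k+1}-θ_i)² ≤ C·(Σ_{i=k+1}^n θ_k²/(θ_k-θ_i)² + Σ_{i=1}^k θ_i²/(θ_{k+1}-θ_i)²) + C·n for some absolute constant C. -/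
theorem stmt_12 :
    ∃ C : ℝ, 0 < C ∧
      ∀ (n k l : ℕ) (θ : ℕ → ℝ),
        (∀ i, 1 ≤ i → i ≤ n → 0 < θ i) →
        (∀ i j, 1 ≤ i → i ≤ j → j ≤ n → θ j ≤ θ i) →
        1 ≤ k → k < n → θ (k + 1) < θ k → 2 ≤ l →
        (n : ℝ) / l + k + (∑ i ∈ Finset.Icc (k + 1) n, θ i) / θ k +
          (∑ i ∈ (Finset.Icc (k + 1) n).filter (fun i => θ k / 2 ≤ θ i),
            θ k ^ 2 / (θ k - θ i) ^ 2) +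
          (∑ i ∈ (Finset.Icc 1 k).filter (fun i => θ i ≤ 2 * θ (k + 1)),
            θ (k + 1) ^ 2 / (θ (k + 1) - θ i) ^ 2) ≤
        C * ((∑ i ∈ Finset.Icc (k + 1) n, θ k ^ 2 / (θ k - θ i) ^ 2) +
              ∑ i ∈ Finset.Icc 1 k, θ i ^ 2 / (θ (k + 1) - θ i) ^ 2) + C * n := by
  refine ⟨3, by norm_num, ?_⟩
  intro n k l θ hpos hmono hk hkn hgap hl
  have hθk : 0 < θ k := hpos k hk (le_of_lt hkn)
  set A := ∑ i ∈ Finset.Icc (k + 1) n, θ k ^ 2 / (θ k - θ i) ^ 2 with hAdef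
  set B := ∑ i ∈ Finset.Icc 1 k, θ i ^ 2 / (θ (k + 1) - θ i) ^ 2 with hBdef
  have hA0 : 0 ≤ A := Finset.sum_nonneg fun i _ => by positivity
  have hB0 : 0 ≤ B := Finset.sum_nonneg fun i _ => by positivity
  -- term 1
  have h1 : (n : ℝ) / l ≤ n := by
    apply div_le_self (Nat.cast_nonneg n)
    exact_mod_cast le_trans (by norm_num) hl
  -- term 2
  have h2 : (k : ℝ) ≤ n := by exact_mod_cast le_of_lt hkn
  -- term 3
  have h3 : (∑ i ∈ Finset.Icc (k + 1) n, θ i) / θ k ≤ n := by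
    rw [div_le_iff₀ hθk]
    calc ∑ i ∈ Finset.Icc (k + 1) n, θ i
        ≤ ∑ i ∈ Finset.Icc (k + 1) n, θ k := by
          apply Finset.sum_le_sum
          intro i hi
          rw [Finset.mem_Icc] at hi
          exact hmono k i hk (le_trans (Nat.le_succ k) hi.1) hi.2
      _ = (Finset.Icc (k + 1) n).card • θ k := (Finset.sum_const _)
      _ = ((Finset.Icc (k + 1) n).card : ℝ) * θ k := by rw [nsmul_eq_mul]
      _ ≤ (n : ℝ) * θ k := by
          apply mul_le_mul_of_nonneg_right _ (le_of_lt hθk)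
          have : (Finset.Icc (k + 1) n).card ≤ n := by
            rw [Nat.card_Icc]; omega
          exact_mod_cast this
  -- term 4
  have h4 : (∑ i ∈ (Finset.Icc (k + 1) n).filter (fun i => θ k / 2 ≤ θ i),
      θ k ^ 2 / (θ k - θ i) ^ 2) ≤ A := by
    apply Finset.sum_le_sum_of_subset_of_nonneg (Finset.filter_subset _ _)
    intro i _ _; positivity
  -- term 5
  have h5 : (∑ i ∈ (Finset.Icc 1 k).filter (fun i => θ i ≤ 2 * θ (k + 1)),
      θ (k + 1) ^ 2 / (θ (k + 1) - θ i) ^ 2) ≤ B := by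
    calc (∑ i ∈ (Finset.Icc 1 k).filter (fun i => θ i ≤ 2 * θ (k + 1)),
        θ (k + 1) ^ 2 / (θ (k + 1) - θ i) ^ 2)
        ≤ ∑ i ∈ (Finset.Icc 1 k).filter (fun i => θ i ≤ 2 * θ (k + 1)),
            θ i ^ 2 / (θ (k + 1) - θ i) ^ 2 := by
          apply Finset.sum_le_sum
          intro i hi
          have hi' := Finset.mem_of_mem_filter i hi
          rw [Finset.mem_Icc] at hi'
          have hθi : θ k ≤ θ i := hmono i k hi'.1 hi'.2 (le_of_lt hkn)
          have hk1 : 0 < θ (k + 1) :=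
            hpos (k + 1) (by omega) (by omega)
          have hd : 0 < (θ (k + 1) - θ i) ^ 2 := by nlinarith
          gcongr
          nlinarith
      _ ≤ B := by
          apply Finset.sum_le_sum_of_subset_of_nonneg (Finset.filter_subset _ _)
          intro i _ _; positivity
  nlinarith [hA0, hB0, Nat.cast_nonneg (α := ℝ) n]
end

section
/- Under the same concentration assumption, if θ̃_{i,j}/θ̃_{j,i} ≥ 1/(1+4√(κ/q)) and q ≥ C·κ³, then θ_i ≥ θ_j·(1 - 8√(κ/q)). -/
theorem stmt_16 :
    ∃ C : ℝ, 0 < C ∧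
      ∀ (κ q θi θj t1 t2 : ℝ),
        1 ≤ κ → C * κ ^ 3 ≤ q →
        0 < θi → 0 < θj →
        0 ≤ t1 → t1 ≤ 1 → 0 ≤ t2 → t2 ≤ 1 → t1 + t2 = 1 →
        |t1 - θi / (θi + θj)| ≤ Real.sqrt (κ * (θi / (θi + θj)) / q) →
        |t2 - θj / (θi + θj)| ≤ Real.sqrt (κ * (θj / (θi + θj)) / q) →
        t1 / t2 ≥ 1 / (1 + 4 * Real.sqrt (κ / q)) →
        θi ≥ θj * (1 - 8 * Real.sqrt (κ / q)) := by
  refine ⟨1, one_pos, ?_⟩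
  intro κ q θi θj t1 t2 hκ hq hθi hθj ht1n ht11 ht2n ht21 hsum hd1 hd2 hratio
  have hκ0 : 0 < κ := lt_of_lt_of_le one_pos hκ
  have hκ3 : (1:ℝ) ≤ κ ^ 3 := one_le_pow₀ hκ
  have hq0 : 0 < q := by linarith
  set s : ℝ := Real.sqrt (κ / q) with hs_def
  have hs : 0 ≤ s := Real.sqrt_nonneg _
  have hS : 0 < θi + θj := by linarith
  have hb1 : Real.sqrt (κ * (θi / (θi + θj)) / q) ≤ s := by
    apply Real.sqrt_le_sqrt
    have hp : θi / (θi + θj) ≤ 1 := by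
      rw [div_le_one hS]; linarith
    gcongr
    nlinarith
  have hb2 : Real.sqrt (κ * (θj / (θi + θj)) / q) ≤ s := by
    apply Real.sqrt_le_sqrt
    have hp : θj / (θi + θj) ≤ 1 := by
      rw [div_le_one hS]; linarith
    gcongr
    nlinarith
  have hd1' : t1 ≤ θi / (θi + θj) + s := by
    have := (abs_le.mp (hd1.trans hb1)).2
    linarith
  have hd2' : θj / (θi + θj) - s ≤ t2 := by
    have := (abs_le.mp (hd2.trans hb2)).1
    linarith
  have h4s : (0:ℝ) < 1 + 4 * s := by linarith
  have ht2pos : 0 < t2 := by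
    rcases ht2n.lt_or_eq with h | h
    · exact h
    · exfalso
      rw [← h, div_zero] at hratio
      have : (0:ℝ) < 1 / (1 + 4 * s) := by positivity
      linarith
  have hmain : t2 ≤ t1 * (1 + 4 * s) := by
    rw [ge_iff_le, div_le_div_iff₀ h4s ht2pos] at hratio
    linarith
  -- multiply the deviation bounds by S := θi + θj
  have h1 : t1 * (θi + θj) ≤ θi + s * (θi + θj) := by
    have := mul_le_mul_of_nonneg_right hd1' hS.le
    calc t1 * (θi + θj) ≤ (θi / (θi + θj) + s) * (θi + θj) := this
      _ = θi + s * (θi + θj) := by field_simp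
  have h2 : θj - s * (θi + θj) ≤ t2 * (θi + θj) := by
    have := mul_le_mul_of_nonneg_right hd2' hS.le
    calc θj - s * (θi + θj) = (θj / (θi + θj) - s) * (θi + θj) := by field_simp
      _ ≤ t2 * (θi + θj) := this
  have h3 : t2 * (θi + θj) ≤ (θi + s * (θi + θj)) * (1 + 4 * s) := by
    calc t2 * (θi + θj) ≤ (t1 * (1 + 4 * s)) * (θi + θj) := by
          exact mul_le_mul_of_nonneg_right hmain hS.le
      _ = (t1 * (θi + θj)) * (1 + 4 * s) := by ring
      _ ≤ (θi + s * (θi + θj)) * (1 + 4 * s) := by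
          exact mul_le_mul_of_nonneg_right h1 h4s.le
  have key : θj - s * (θi + θj) ≤ (θi + s * (θi + θj)) * (1 + 4 * s) := h2.trans h3
  nlinarith [mul_nonneg (mul_nonneg hθj.le hs) hs,
    mul_nonneg (mul_nonneg (mul_nonneg hθj.le hs) hs) hs,
    mul_nonneg (mul_nonneg hθi.le hs) hs,
    mul_nonneg (mul_nonneg (mul_nonneg hθi.le hs) hs) hs]
end
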